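/- For the uniform state ψ with ψ_k = 1/√d for all k and 0 < p < d/(d+1), the operator E = I − |ψ⟩⟨ψ| is an optimal effect operator and the maximal reliability is R_p^max(ψ) = 1 − p/d. -/

import Mathlib

/-!
For the uniform state `⟨ψ|diag E|ψ⟩ = tr E / d`, so with `t = tr E` and `u = ⟨ψ|1 - E|ψ⟩` the
reliability is `p t / d + (1 - p) u`. Positivity of `E` gives `u ≤ 1`, and positivity of `1 - E`
gives `u ≤ tr (1 - E) = d - t`. Hence the reliability is at most `p + (1 - p - p / d) u`, and the
slack `1 - p - p / d` is nonnegative exactly when `p ≤ d / (d + 1)`, so it is at most `1 - p / d`.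
Both constraints are tight at `E = 1 - |ψ⟩⟨ψ|`.
-/

open Matrix
open scoped ComplexOrder

namespace Matrix

variable {𝕜 n : Type*} [RCLike 𝕜] [Fintype n] {ψ : n → 𝕜}

lemma vecMulVec_star_mul_self (hψ : star ψ ⬝ᵥ ψ = 1) :
    vecMulVec ψ (star ψ) * vecMulVec ψ (star ψ) = vecMulVec ψ (star ψ) := by
  rw [vecMulVec_mul_vecMulVec, hψ, one_smul]

lemma trace_mul_vecMulVec_star (F : Matrix n n 𝕜) :
    (F * vecMulVec ψ (star ψ)).trace = star ψ ⬝ᵥ (F *ᵥ ψ) := by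
  rw [mul_vecMulVec, trace_vecMulVec, dotProduct_comm]

variable [DecidableEq n]

omit [Fintype n] in
lemma isHermitian_one_sub_vecMulVec_star : (1 - vecMulVec ψ (star ψ)).IsHermitian := by
  rw [IsHermitian, conjTranspose_sub, conjTranspose_one, conjTranspose_vecMulVec, star_star]

lemma one_sub_vecMulVec_star_mul_self (hψ : star ψ ⬝ᵥ ψ = 1) :
    (1 - vecMulVec ψ (star ψ)) * (1 - vecMulVec ψ (star ψ)) = 1 - vecMulVec ψ (star ψ) := by
  rw [Matrix.sub_mul, Matrix.one_mul, Matrix.mul_sub, Matrix.mul_one, vecMulVec_star_mul_self hψ]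
  abel

lemma posSemidef_one_sub_vecMulVec_star (hψ : star ψ ⬝ᵥ ψ = 1) :
    (1 - vecMulVec ψ (star ψ)).PosSemidef := by
  nth_rw 1 [← one_sub_vecMulVec_star_mul_self hψ, ← isHermitian_one_sub_vecMulVec_star]
  exact posSemidef_conjTranspose_mul_self _

/-- The gap is `tr (Q F Q)` for the complementary projection `Q = 1 - |ψ⟩⟨ψ|`. -/
lemma PosSemidef.dotProduct_mulVec_le_trace {F : Matrix n n 𝕜} (hF : F.PosSemidef)
    (hψ : star ψ ⬝ᵥ ψ = 1) : star ψ ⬝ᵥ (F *ᵥ ψ) ≤ F.trace := by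
  set Q := 1 - vecMulVec ψ (star ψ)
  have hgap : F.trace - star ψ ⬝ᵥ (F *ᵥ ψ) = (Qᴴ * F * Q).trace := by
    rw [isHermitian_one_sub_vecMulVec_star, Matrix.mul_assoc, trace_mul_comm, Matrix.mul_assoc,
      one_sub_vecMulVec_star_mul_self hψ, Matrix.mul_sub, Matrix.mul_one, trace_sub,
      trace_mul_vecMulVec_star]
  exact sub_nonneg.mp (hgap ▸ (hF.conjTranspose_mul_mul_same Q).trace_nonneg)

lemma PosSemidef.dotProduct_one_sub_mulVec_le_one {E : Matrix n n 𝕜} (hE : E.PosSemidef)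
    (hψ : star ψ ⬝ᵥ ψ = 1) : star ψ ⬝ᵥ ((1 - E) *ᵥ ψ) ≤ 1 := by
  rw [sub_mulVec, one_mulVec, dotProduct_sub, hψ]
  exact sub_le_self 1 (hE.dotProduct_mulVec_nonneg ψ)

end Matrix

section FlatVector

variable {𝕜 n : Type*} [RCLike 𝕜] [Fintype n] {ψ : n → 𝕜}

lemma dotProduct_star_self_eq_one_of_flat [Nonempty n]
    (hψ : ∀ k, star (ψ k) * ψ k = (Fintype.card n : 𝕜)⁻¹) : star ψ ⬝ᵥ ψ = 1 := by
  simp only [dotProduct, Pi.star_apply, hψ, Finset.sum_const, Finset.card_univ, nsmul_eq_mul]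
  exact mul_inv_cancel₀ (Nat.cast_ne_zero.mpr Fintype.card_ne_zero)

lemma dotProduct_diagonal_diag_mulVec_of_flat [DecidableEq n]
    (hψ : ∀ k, star (ψ k) * ψ k = (Fintype.card n : 𝕜)⁻¹) (E : Matrix n n 𝕜) :
    star ψ ⬝ᵥ (diagonal (fun k => E k k) *ᵥ ψ) = E.trace / Fintype.card n := by
  simp only [dotProduct, mulVec_diagonal, Pi.star_apply, trace, diag, Finset.sum_div]
  refine Finset.sum_congr rfl fun k _ => ?_
  rw [← mul_assoc, mul_comm _ (E k k), mul_assoc, hψ, div_eq_mul_inv]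

end FlatVector

section Reliability

variable {n : Type*} [Fintype n] [DecidableEq n]

/-- `R_{ψ,p}(E)`. -/
noncomputable def reliability (p : ℝ) (ψ : n → ℂ) (E : Matrix n n ℂ) : ℝ :=
  ((p : ℂ) * (star ψ ⬝ᵥ (diagonal (fun k => E k k) *ᵥ ψ)) +
    (1 - (p : ℂ)) * (star ψ ⬝ᵥ ((1 - E) *ᵥ ψ))).re

variable {ψ : n → ℂ} (hψ : ∀ k, star (ψ k) * ψ k = (Fintype.card n : ℂ)⁻¹) (p : ℝ)
include hψ

lemma reliability_eq_of_flat (E : Matrix n n ℂ) :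
    reliability p ψ E =
      p * (E.trace.re / Fintype.card n) + (1 - p) * (star ψ ⬝ᵥ ((1 - E) *ᵥ ψ)).re := by
  rw [reliability, dotProduct_diagonal_diag_mulVec_of_flat hψ, Complex.add_re,
    ← Complex.ofReal_one, ← Complex.ofReal_sub, Complex.re_ofReal_mul, Complex.re_ofReal_mul,
    Complex.div_natCast_re]

lemma reliability_one_sub_vecMulVec_star_of_flat [Nonempty n] :
    reliability p ψ (1 - vecMulVec ψ (star ψ)) = 1 - p / Fintype.card n := by
  have hnorm := dotProduct_star_self_eq_one_of_flat hψ
  have hcard : (Fintype.card n : ℝ) ≠ 0 := Nat.cast_ne_zero.mpr Fintype.card_ne_zero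
  have htrace : (1 - vecMulVec ψ (star ψ)).trace = Fintype.card n - 1 := by
    rw [trace_sub, trace_one, trace_vecMulVec, dotProduct_comm, hnorm]
  have hexp : star ψ ⬝ᵥ (vecMulVec ψ (star ψ) *ᵥ ψ) = 1 := by
    rw [← trace_mul_vecMulVec_star, vecMulVec_star_mul_self hnorm, trace_vecMulVec,
      dotProduct_comm, hnorm]
  rw [reliability_eq_of_flat hψ, sub_sub_cancel, hexp, htrace]
  simp only [Complex.sub_re, Complex.natCast_re, Complex.one_re, mul_one]
  field_simp
  ring

lemma reliability_le_of_flat [Nonempty n] (hp0 : 0 ≤ p)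
    (hp1 : p ≤ Fintype.card n / (Fintype.card n + 1)) {E : Matrix n n ℂ} (hE : E.PosSemidef)
    (hE1 : (1 - E).PosSemidef) : reliability p ψ E ≤ 1 - p / Fintype.card n := by
  have hnorm := dotProduct_star_self_eq_one_of_flat hψ
  set c : ℝ := (Fintype.card n : ℝ)
  have hc : 0 < c := Nat.cast_pos.mpr Fintype.card_pos
  set t := E.trace.re
  set u := (star ψ ⬝ᵥ ((1 - E) *ᵥ ψ)).re
  have hu1 : u ≤ 1 := (Complex.le_def.mp (hE.dotProduct_one_sub_mulVec_le_one hnorm)).1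
  have hut : u ≤ c - t := by
    have := (Complex.le_def.mp (hE1.dotProduct_mulVec_le_trace hnorm)).1
    simpa [trace_sub, c, t] using this
  have hslack : 0 ≤ 1 - p - p / c := by
    rw [le_div_iff₀ (by positivity)] at hp1
    rw [show 1 - p - p / c = (c - p * (c + 1)) / c by field_simp; ring]
    exact div_nonneg (by linarith) hc.le
  calc reliability p ψ E = p * (t / c) + (1 - p) * u := reliability_eq_of_flat hψ p E
    _ ≤ p * ((c - u) / c) + (1 - p) * u := by gcongr; linarith
    _ = p + (1 - p - p / c) * u := by field_simp; ring
    _ ≤ p + (1 - p - p / c) * 1 := by gcongr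
    _ = 1 - p / c := by ring

end Reliability

/-- for the uniform state, E = I − |ψ⟩⟨ψ| is optimal, with maximal
reliability 1 − p/d. -/
theorem stmt_11 (d : ℕ) (hd : 0 < d) (ψ : Fin d → ℂ)
    (hψdef : ψ = fun _ => (1 / Real.sqrt d : ℂ))
    (p : ℝ) (hp0 : 0 < p) (hp1 : p < d / (d + 1))
    (E₀ : Matrix (Fin d) (Fin d) ℂ) (hE₀ : E₀ = 1 - vecMulVec ψ (star ψ)) :
    E₀.PosSemidef ∧ (1 - E₀).PosSemidef ∧
    (∀ E : Matrix (Fin d) (Fin d) ℂ, E.PosSemidef → (1 - E).PosSemidef →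
      ((p : ℂ) * (star ψ ⬝ᵥ (Matrix.diagonal (fun k => E k k) *ᵥ ψ)) +
        ((1 : ℂ) - (p : ℂ)) * (star ψ ⬝ᵥ ((1 - E) *ᵥ ψ))).re ≤
      ((p : ℂ) * (star ψ ⬝ᵥ (Matrix.diagonal (fun k => E₀ k k) *ᵥ ψ)) +
        ((1 : ℂ) - (p : ℂ)) * (star ψ ⬝ᵥ ((1 - E₀) *ᵥ ψ))).re) ∧
    ((p : ℂ) * (star ψ ⬝ᵥ (Matrix.diagonal (fun k => E₀ k k) *ᵥ ψ)) +
      ((1 : ℂ) - (p : ℂ)) * (star ψ ⬝ᵥ ((1 - E₀) *ᵥ ψ))).re = 1 - p / d := by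
  have : NeZero d := ⟨hd.ne'⟩
  have hflat : ∀ k, star (ψ k) * ψ k = (Fintype.card (Fin d) : ℂ)⁻¹ := fun k => by
    subst hψdef
    rw [Fintype.card_fin, Complex.star_def, map_div₀, map_one, Complex.conj_ofReal,
      div_mul_div_comm, one_mul, ← Complex.ofReal_mul, Real.mul_self_sqrt d.cast_nonneg,
      Complex.ofReal_natCast, one_div]
  have hnorm := dotProduct_star_self_eq_one_of_flat hflat
  have hvalue := reliability_one_sub_vecMulVec_star_of_flat hflat p
  rw [Fintype.card_fin] at hvalue
  subst hE₀
  refine ⟨posSemidef_one_sub_vecMulVec_star hnorm, ?_, fun E hE hE1 => ?_, hvalue⟩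
  · rw [sub_sub_cancel]
    exact posSemidef_vecMulVec_self_star ψ
  · change reliability p ψ E ≤ reliability p ψ _
    rw [hvalue]
    simpa using reliability_le_of_flat hflat p hp0.le (by simpa using hp1.le) hE hE1
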